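/- Let ({f_i}_{i∈I}, T) be a general IFS with uniform contraction constant c ∈ (0,1) on a complete metric space (X,ρ), z_i the unique fixed point of f_i, and suppose there exists x ∈ X with Σ_{n≥1} (max_{i∈I_n} ρ(x, z_i))·c^n < ∞. Set b_x(l) := Σ_{k≥l} (max_{i∈I_k} ρ(x, z_i))·c^k. Then the family {π(T_ω)}, indexed by finite prefix words ω of T, satisfies: (i) ⋃_{ω′ ∈ T_ω^{[1,n]}} f_{ω′}(π(T_{ωω′})) = π(T_ω) for every ω and n ≥ 1; (ii) for every nonempty compact A ⊆ X there exists D′(A) > 0 with ρ_H(A, π(T_ω)) ≤ D′(A)·max{1, c^{−(|ω|+1)}·b_x(|ω|+1)} for every ω. Moreover, {π(T_ω)} is the unique family {K_ω} of nonempty compact subsets of X indexed by the finite prefix words of T satisfying properties (i) and (ii). -/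

import Mathlib

/-- `seqComp f ω n = f_{ω₁} ∘ ⋯ ∘ f_{ω_n}` (with `ω` indexed from `0`). -/
def seqComp {X I : Type*} (f : I → X → X) (ω : ℕ → I) : ℕ → X → X
  | 0 => id
  | n + 1 => seqComp f ω n ∘ f (ω n)

/-- `wcat a w σ` is the concatenation of the finite word consisting of the first `a`
letters of `w` with the infinite word `σ`. -/
def wcat {I : Type*} (a : ℕ) (w σ : ℕ → I) : ℕ → I :=
  fun k => if k < a then w k else σ (k - a)

/-- `Tsub T a w` is the conditioned subtree `T_ω` for the finite word `ω` consisting of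
the first `a` letters of `w`. -/
def Tsub {I : Type*} (T : Set (ℕ → I)) (a : ℕ) (w : ℕ → I) : Set (ℕ → I) :=
  {τ | wcat a w τ ∈ T}

/-- `IsPrefixWord T a w` : the first `a` letters of `w` form an initial word of some
element of `T`. -/
def IsPrefixWord {I : Type*} (T : Set (ℕ → I)) (a : ℕ) (w : ℕ → I) : Prop :=
  ∃ τ ∈ T, ∀ k < a, τ k = w k

/-- `posMax T z x n = max_{i ∈ I_{n+1}} ρ(x, z_i)`, where `I_{n+1}` is the set of letters
occurring at (0-based) position `n` in elements of the tree `T`. -/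
noncomputable def posMax {X I : Type*} [MetricSpace X]
    (T : Set (ℕ → I)) (z : I → X) (x : X) (n : ℕ) : ℝ :=
  sSup ((fun i => dist x (z i)) '' ((fun ω : ℕ → I => ω n) '' T))

/-- `bX T z x c a = b_x(a+1) = ∑_{k ≥ a+1} (max_{i∈I_k} ρ(x,z_i))·c^k` (1-based `k`). -/
noncomputable def bX {X I : Type*} [MetricSpace X]
    (T : Set (ℕ → I)) (z : I → X) (x : X) (c : ℝ) (a : ℕ) : ℝ :=
  ∑' k : ℕ, posMax T z x (a + k) * c ^ (a + 1 + k)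

set_option linter.unusedSectionVars false
set_option linter.unusedVariables false

open Filter Metric Set

section Aux

variable {X I : Type*} [MetricSpace X] [TopologicalSpace I] [DiscreteTopology I]

lemma seqComp_succ_apply (f : I → X → X) (ω : ℕ → I) (n : ℕ) (u : X) :
    seqComp f ω (n + 1) u = seqComp f ω n (f (ω n) u) := rfl

lemma seqComp_congr (f : I → X → X) {ω ω' : ℕ → I} {n : ℕ} (h : ∀ k < n, ω k = ω' k) :
    seqComp f ω n = seqComp f ω' n := by
  induction n with
  | zero => rfl
  | succ n ih =>
    have h1 := ih fun k hk => h k (Nat.lt_succ_of_lt hk)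
    show seqComp f ω n ∘ f (ω n) = seqComp f ω' n ∘ f (ω' n)
    rw [h1, h n (Nat.lt_succ_self n)]

lemma seqComp_add (f : I → X → X) (ω : ℕ → I) (n m : ℕ) :
    seqComp f ω (n + m) = seqComp f ω n ∘ seqComp f (fun k => ω (n + k)) m := by
  induction m with
  | zero => rfl
  | succ m ih =>
    show seqComp f ω (n + m) ∘ f (ω (n + m)) = _
    rw [ih]
    rfl

variable {c : ℝ} {f : I → X → X}

lemma seqComp_dist_le (hc0 : 0 < c)
    (hf : ∀ i, ∀ u v : X, dist (f i u) (f i v) ≤ c * dist u v)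
    (ω : ℕ → I) (n : ℕ) (u v : X) :
    dist (seqComp f ω n u) (seqComp f ω n v) ≤ c ^ n * dist u v := by
  induction n generalizing u v with
  | zero => simp [seqComp]
  | succ n ih =>
    calc dist (seqComp f ω (n+1) u) (seqComp f ω (n+1) v)
        = dist (seqComp f ω n (f (ω n) u)) (seqComp f ω n (f (ω n) v)) := rfl
      _ ≤ c ^ n * dist (f (ω n) u) (f (ω n) v) := ih _ _
      _ ≤ c ^ n * (c * dist u v) := by
          have := hf (ω n) u v
          have hcn : (0:ℝ) ≤ c ^ n := by positivity
          nlinarith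
      _ = c ^ (n+1) * dist u v := by ring

lemma seqComp_continuous (hc0 : 0 < c)
    (hf : ∀ i, ∀ u v : X, dist (f i u) (f i v) ≤ c * dist u v)
    (ω : ℕ → I) (n : ℕ) : Continuous (seqComp f ω n) := by
  induction n with
  | zero => exact continuous_id
  | succ n ih =>
    have hfc : Continuous (f (ω n)) := by
      refine (LipschitzWith.of_dist_le_mul (K := c.toNNReal) fun u v => ?_).continuous
      rw [Real.coe_toNNReal c hc0.le]; exact hf (ω n) u v
    exact ih.comp hfc

variable {T : Set (ℕ → I)} {z : I → X} {x : X}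

lemma posMax_nonneg (n : ℕ) : 0 ≤ posMax T z x n :=
  Real.sSup_nonneg (by rintro r ⟨i, -, rfl⟩; exact dist_nonneg)

lemma dist_le_posMax (hTc : IsCompact T) {σ : ℕ → I} (hσ : σ ∈ T) (n : ℕ) :
    dist x (z (σ n)) ≤ posMax T z x n := by
  apply le_csSup
  · have h1 : ((fun ω : ℕ → I => ω n) '' T).Finite :=
      (hTc.image (continuous_apply n)).finite_of_discrete
    exact (h1.image _).bddAbove
  · exact ⟨σ n, ⟨σ, hσ, rfl⟩, rfl⟩

lemma bX_eq (a : ℕ) : bX T z x c a = ∑' k : ℕ, posMax T z x (a + k) * c ^ ((a + k) + 1) := by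
  unfold bX
  exact tsum_congr fun k => by rw [show a + 1 + k = (a + k) + 1 by omega]

lemma bX_nonneg (hc0 : 0 < c) (a : ℕ) : 0 ≤ bX T z x c a :=
  tsum_nonneg fun k => by have := posMax_nonneg (T := T) (z := z) (x := x) (a + k); positivity

lemma summable_tail (hc0 : 0 < c)
    (hsum : Summable fun n : ℕ => posMax T z x n * c ^ (n + 1)) (a : ℕ) :
    Summable fun k : ℕ => posMax T z x (a + k) * c ^ ((a + k) + 1) := by
  have := (summable_nat_add_iff (f := fun n : ℕ => posMax T z x n * c ^ (n + 1)) a).2 hsum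
  simpa [add_comm] using this

lemma bX_tendsto (hc0 : 0 < c)
    (hsum : Summable fun n : ℕ => posMax T z x n * c ^ (n + 1)) (a : ℕ) :
    Tendsto (fun n => bX T z x c (a + n)) atTop (nhds 0) := by
  have h := (tendsto_sum_nat_add (fun n : ℕ => posMax T z x n * c ^ (n + 1))).comp
    (tendsto_add_atTop_nat a)
  have he : (fun n => bX T z x c (a + n)) =
      (fun i => ∑' k : ℕ, posMax T z x (k + i) * c ^ ((k + i) + 1)) ∘ (fun n => n + a) := by
    funext n
    rw [bX_eq]
    exact tsum_congr fun k => by rw [show (a + n) + k = k + (n + a) by omega]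
  rw [he]
  exact h

end Aux

set_option linter.unusedSectionVars false
set_option linter.unusedVariables false

section Aux2

variable {X I : Type*} [MetricSpace X] [TopologicalSpace I] [DiscreteTopology I]
variable {c : ℝ} {f : I → X → X} {T : Set (ℕ → I)} {z : I → X} {x : X}

lemma wcat_wcat (a n : ℕ) (w w' τ : ℕ → I) :
    wcat a w (wcat n w' τ) = wcat (a + n) (wcat a w w') τ := by
  funext k
  simp only [wcat]
  rcases lt_or_ge k a with h | h
  · rw [if_pos h, if_pos (by omega), if_pos h]
  · rw [if_neg (by omega)]
    rcases lt_or_ge k (a + n) with h2 | h2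
    · rw [if_pos (by omega), if_pos h2, if_neg (by omega)]
    · rw [if_neg (by omega), if_neg (by omega)]
      congr 1; omega

lemma wcat_drop (a : ℕ) (w σ : ℕ → I) (h : ∀ k < a, σ k = w k) :
    wcat a w (fun k => σ (a + k)) = σ := by
  funext k
  simp only [wcat]
  rcases lt_or_ge k a with hk | hk
  · rw [if_pos hk, h k hk]
  · rw [if_neg (by omega)]; congr 1; omega

lemma Tsub_nonempty {a : ℕ} {w : ℕ → I} (hw : IsPrefixWord T a w) :
    (Tsub T a w).Nonempty := by
  obtain ⟨σ, hσ, hpre⟩ := hw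
  exact ⟨fun k => σ (a + k), show wcat a w _ ∈ T by rw [wcat_drop a w σ hpre]; exact hσ⟩

lemma isCompact_Tsub (hTc : IsCompact T) (a : ℕ) (w : ℕ → I) :
    IsCompact (Tsub T a w) := by
  have hrep : Tsub T a w =
      (fun σ : ℕ → I => fun k => σ (a + k)) '' (T ∩ ⋂ k ∈ Finset.range a,
        (fun σ : ℕ → I => σ k) ⁻¹' {w k}) := by
    ext τ
    constructor
    · intro hτ
      refine ⟨wcat a w τ, ⟨hτ, ?_⟩, ?_⟩
      · simp only [Set.mem_iInter, Set.mem_preimage, Set.mem_singleton_iff, Finset.mem_range]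
        intro k hk
        simp [wcat, hk]
      · funext k
        simp only [wcat]
        rw [if_neg (by omega)]
        congr 1; omega
    · rintro ⟨σ, ⟨hσT, hσp⟩, rfl⟩
      simp only [Set.mem_iInter, Set.mem_preimage, Set.mem_singleton_iff, Finset.mem_range] at hσp
      show wcat a w _ ∈ T
      rw [wcat_drop a w σ hσp]
      exact hσT
  rw [hrep]
  have hclosed : IsClosed (⋂ k ∈ Finset.range a, (fun σ : ℕ → I => σ k) ⁻¹' {w k}) := by
    refine isClosed_biInter fun k _ => ?_
    exact (isClosed_discrete _).preimage (continuous_apply k)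
  exact (hTc.inter_right hclosed).image (continuous_pi fun k => continuous_apply (a + k))

/-- tail estimate -/
lemma dist_seqComp_limit (hc0 : 0 < c) (hc1 : c < 1) (hTc : IsCompact T)
    (hf : ∀ i, ∀ u v : X, dist (f i u) (f i v) ≤ c * dist u v)
    (hz : ∀ i, f i (z i) = z i)
    (hsum : Summable fun n : ℕ => posMax T z x n * c ^ (n + 1))
    {a : ℕ} {w τ : ℕ → I} (hτ : wcat a w τ ∈ T)
    {y : X} (hlim : Filter.Tendsto (fun n => seqComp f τ n x) Filter.atTop (nhds y))
    (n : ℕ) :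
    dist (seqComp f τ n x) y ≤ (1 + c) * c⁻¹ ^ (a + 1) * bX T z x c (a + n) := by
  have hcne : c ≠ 0 := ne_of_gt hc0
  set d : ℕ → ℝ := fun m => (1 + c) * c⁻¹ ^ (a + 1) * (posMax T z x (a + m) * c ^ ((a + m) + 1)) with hd
  have hsd : Summable d := (summable_tail hc0 hsum a).mul_left _
  have hstep : ∀ m, dist (seqComp f τ m x) (seqComp f τ (m + 1) x) ≤ d m := by
    intro m
    have h1 : dist (seqComp f τ m x) (seqComp f τ (m+1) x)
        ≤ c ^ m * dist x (f (τ m) x) := by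
      rw [seqComp_succ_apply]
      exact seqComp_dist_le hc0 hf τ m x _
    have h2 : dist x (f (τ m) x) ≤ (1 + c) * posMax T z x (a + m) := by
      have hmem : (wcat a w τ) (a + m) = τ m := by
        simp only [wcat]; rw [if_neg (by omega)]; congr 1; omega
      have hp : dist x (z (τ m)) ≤ posMax T z x (a + m) := by
        have := dist_le_posMax (z := z) (x := x) hTc hτ (a + m)
        rwa [hmem] at this
      calc dist x (f (τ m) x) ≤ dist x (z (τ m)) + dist (z (τ m)) (f (τ m) x) :=
            dist_triangle _ _ _
        _ ≤ dist x (z (τ m)) + c * dist x (z (τ m)) := by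
            have : dist (z (τ m)) (f (τ m) x) ≤ c * dist x (z (τ m)) := by
              conv_lhs => rw [← hz (τ m)]
              rw [dist_comm x (z (τ m))]
              exact hf (τ m) _ _
            linarith
        _ ≤ (1 + c) * posMax T z x (a + m) := by nlinarith [posMax_nonneg (T := T) (z := z) (x := x) (a + m), dist_nonneg (x := x) (y := z (τ m))]
    have h3 : d m = (1 + c) * posMax T z x (a + m) * c ^ m := by
      rw [hd]
      simp only
      rw [inv_pow]
      rw [show (a + m) + 1 = (a + 1) + m by omega, pow_add]
      field_simp
      ring
    rw [h3]
    calc dist (seqComp f τ m x) (seqComp f τ (m+1) x) ≤ c ^ m * dist x (f (τ m) x) := h1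
      _ ≤ c ^ m * ((1 + c) * posMax T z x (a + m)) := by
          have : (0:ℝ) ≤ c ^ m := by positivity
          nlinarith
      _ = (1 + c) * posMax T z x (a + m) * c ^ m := by ring
  have := dist_le_tsum_of_dist_le_of_tendsto d hstep hsd hlim n
  refine this.trans (le_of_eq ?_)
  have : ∑' m : ℕ, d (n + m)
      = (1 + c) * c⁻¹ ^ (a + 1) * ∑' m : ℕ, (posMax T z x ((a + n) + m) * c ^ (((a + n) + m) + 1)) := by
    rw [← tsum_mul_left]
    exact tsum_congr fun m => by rw [hd]; simp only; rw [show a + (n + m) = (a + n) + m by omega]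
  rw [this, bX_eq]

end Aux2

section Aux3

variable {X I : Type*} [MetricSpace X] [TopologicalSpace I] [DiscreteTopology I]
variable {c : ℝ} {f : I → X → X} {T : Set (ℕ → I)} {z : I → X} {x : X} {π : (ℕ → I) → X}

lemma continuousOn_proj (hc0 : 0 < c) (hc1 : c < 1) (hTc : IsCompact T)
    (hf : ∀ i, ∀ u v : X, dist (f i u) (f i v) ≤ c * dist u v)
    (hz : ∀ i, f i (z i) = z i)
    (hsum : Summable fun n : ℕ => posMax T z x n * c ^ (n + 1))
    (hπ : ∀ (a : ℕ) (w τ : ℕ → I), wcat a w τ ∈ T →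
      Filter.Tendsto (fun n => seqComp f τ n x) Filter.atTop (nhds (π τ)))
    (a : ℕ) (w : ℕ → I) : ContinuousOn π (Tsub T a w) := by
  intro σ hσ
  have hσT : wcat a w σ ∈ T := hσ
  show Filter.Tendsto π (nhdsWithin σ (Tsub T a w)) (nhds (π σ))
  rw [Metric.tendsto_nhds]
  intro ε hε
  have h0 : Filter.Tendsto (fun n => 2 * ((1 + c) * c⁻¹ ^ (a + 1) * bX T z x c (a + n)))
      Filter.atTop (nhds 0) := by
    have := (bX_tendsto (T := T) (z := z) (x := x) hc0 hsum a).const_mul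
      (2 * ((1 + c) * c⁻¹ ^ (a + 1)))
    simpa [mul_assoc] using this
  obtain ⟨n, hn⟩ := (h0.eventually (gt_mem_nhds hε)).exists
  have hU : IsOpen {σ' : ℕ → I | ∀ k < n, σ' k = σ k} := by
    have : {σ' : ℕ → I | ∀ k < n, σ' k = σ k}
        = ⋂ k ∈ Finset.range n, (fun σ' : ℕ → I => σ' k) ⁻¹' {σ k} := by
      ext σ'; simp [Finset.mem_range]
    rw [this]
    exact isOpen_biInter_finset fun k _ => (continuous_apply k).isOpen_preimage _
      (isOpen_discrete _)
  have hσU : σ ∈ {σ' : ℕ → I | ∀ k < n, σ' k = σ k} := fun k _ => rfl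
  filter_upwards [mem_nhdsWithin_of_mem_nhds (hU.mem_nhds hσU), self_mem_nhdsWithin]
    with σ' h1 h2
  have hσ'T : wcat a w σ' ∈ T := h2
  have e1 : seqComp f σ' n = seqComp f σ n := seqComp_congr f h1
  have b1 : dist (seqComp f σ' n x) (π σ') ≤ (1 + c) * c⁻¹ ^ (a + 1) * bX T z x c (a + n) :=
    dist_seqComp_limit hc0 hc1 hTc hf hz hsum hσ'T (hπ a w σ' hσ'T) n
  have b2 : dist (seqComp f σ n x) (π σ) ≤ (1 + c) * c⁻¹ ^ (a + 1) * bX T z x c (a + n) :=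
    dist_seqComp_limit hc0 hc1 hTc hf hz hsum hσT (hπ a w σ hσT) n
  calc dist (π σ') (π σ) ≤ dist (π σ') (seqComp f σ' n x) + dist (seqComp f σ' n x) (π σ) :=
        dist_triangle _ _ _
    _ = dist (seqComp f σ' n x) (π σ') + dist (seqComp f σ n x) (π σ) := by
        rw [dist_comm, e1]
    _ ≤ 2 * ((1 + c) * c⁻¹ ^ (a + 1) * bX T z x c (a + n)) := by linarith
    _ < ε := hn

/-- The functional equation `π (w'τ) = f_{w'}(π τ)`. -/
lemma pi_eq (hc0 : 0 < c)
    (hf : ∀ i, ∀ u v : X, dist (f i u) (f i v) ≤ c * dist u v)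
    (hπ : ∀ (a : ℕ) (w τ : ℕ → I), wcat a w τ ∈ T →
      Filter.Tendsto (fun n => seqComp f τ n x) Filter.atTop (nhds (π τ)))
    (a n : ℕ) (w w' τ : ℕ → I) (hτ : wcat (a + n) (wcat a w w') τ ∈ T) :
    π (wcat n w' τ) = seqComp f w' n (π τ) := by
  set σ := wcat n w' τ with hσdef
  have hσ : wcat a w σ ∈ T := by rw [hσdef, wcat_wcat]; exact hτ
  have h1 := hπ a w σ hσ
  have h2 := hπ (a + n) (wcat a w w') τ hτ
  have h3 : Filter.Tendsto (fun m => seqComp f σ (n + m) x) Filter.atTop (nhds (π σ)) := by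
    have := h1.comp (Filter.tendsto_add_atTop_nat n)
    simpa [Function.comp_def, add_comm] using this
  have h4 : (fun m => seqComp f σ (n + m) x) = fun m => seqComp f w' n (seqComp f τ m x) := by
    funext m
    rw [seqComp_add]
    have e1 : seqComp f σ n = seqComp f w' n :=
      seqComp_congr f fun k hk => by simp [hσdef, wcat, hk]
    have e2 : (fun k => σ (n + k)) = τ := by
      funext k; simp only [hσdef, wcat]; rw [if_neg (by omega)]; congr 1; omega
    rw [e1, e2]
    rfl
  rw [h4] at h3
  have h5 : Filter.Tendsto (fun m => seqComp f w' n (seqComp f τ m x)) Filter.atTop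
      (nhds (seqComp f w' n (π τ))) :=
    ((seqComp_continuous hc0 hf w' n).tendsto _).comp h2
  exact tendsto_nhds_unique h3 h5

/-- Property (i) for the family of limit sets. -/
lemma part_i (hc0 : 0 < c)
    (hf : ∀ i, ∀ u v : X, dist (f i u) (f i v) ≤ c * dist u v)
    (hπ : ∀ (a : ℕ) (w τ : ℕ → I), wcat a w τ ∈ T →
      Filter.Tendsto (fun n => seqComp f τ n x) Filter.atTop (nhds (π τ)))
    (a : ℕ) (w : ℕ → I) (n : ℕ) :
    (⋃ w' : ℕ → I, ⋃ (_ : IsPrefixWord (Tsub T a w) n w'),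
      seqComp f w' n '' (π '' Tsub T (a + n) (wcat a w w'))) = π '' Tsub T a w := by
  ext p
  simp only [Set.mem_iUnion, Set.mem_image]
  constructor
  · rintro ⟨w', hw', q, ⟨τ, hτ, rfl⟩, rfl⟩
    have hτT : wcat (a + n) (wcat a w w') τ ∈ T := hτ
    refine ⟨wcat n w' τ, ?_, pi_eq hc0 hf hπ a n w w' τ hτT⟩
    show wcat a w (wcat n w' τ) ∈ T
    rw [wcat_wcat]; exact hτT
  · rintro ⟨σ, hσ, rfl⟩
    have hσT : wcat a w σ ∈ T := hσ
    have href : wcat (a + n) (wcat a w σ) (fun k => σ (n + k)) = wcat a w σ := by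
      funext k
      simp only [wcat]
      rcases lt_or_ge k (a + n) with hk | hk
      · rw [if_pos hk]
      · rw [if_neg (by omega), if_neg (by omega)]
        congr 1; omega
    have hτT : wcat (a + n) (wcat a w σ) (fun k => σ (n + k)) ∈ T := by
      show wcat (a + n) (wcat a w σ) (fun k => σ (n + k)) ∈ T
      rw [href]; exact hσT
    have hσeq : wcat n σ (fun k => σ (n + k)) = σ := by
      funext k
      simp only [wcat]
      rcases lt_or_ge k n with hk | hk
      · rw [if_pos hk]
      · rw [if_neg (by omega)]; congr 1; omega
    refine ⟨σ, ⟨σ, hσ, fun k _ => rfl⟩, π (fun k => σ (n + k)), ⟨fun k => σ (n + k), hτT, rfl⟩, ?_⟩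
    have := pi_eq hc0 hf hπ a n w σ (fun k => σ (n + k)) hτT
    rw [hσeq] at this
    exact this.symm
end Aux3

section Aux4

open EMetric Metric

variable {X I : Type*} [MetricSpace X] [TopologicalSpace I] [DiscreteTopology I]
variable {c : ℝ} {f : I → X → X} {T : Set (ℕ → I)} {z : I → X} {x : X} {π : (ℕ → I) → X}

lemma dist_x_pi (hc0 : 0 < c) (hc1 : c < 1) (hTc : IsCompact T)
    (hf : ∀ i, ∀ u v : X, dist (f i u) (f i v) ≤ c * dist u v)
    (hz : ∀ i, f i (z i) = z i)
    (hsum : Summable fun n : ℕ => posMax T z x n * c ^ (n + 1))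
    (hπ : ∀ (a : ℕ) (w τ : ℕ → I), wcat a w τ ∈ T →
      Filter.Tendsto (fun n => seqComp f τ n x) Filter.atTop (nhds (π τ)))
    {a : ℕ} {w σ : ℕ → I} (hσ : σ ∈ Tsub T a w) :
    dist x (π σ) ≤ (1 + c) * c⁻¹ ^ (a + 1) * bX T z x c a := by
  have hσT : wcat a w σ ∈ T := hσ
  have := dist_seqComp_limit hc0 hc1 hTc hf hz hsum hσT (hπ a w σ hσT) 0
  simpa [seqComp] using this

lemma hdist_x_bound (hc0 : 0 < c) (hc1 : c < 1) (hTc : IsCompact T)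
    (hf : ∀ i, ∀ u v : X, dist (f i u) (f i v) ≤ c * dist u v)
    (hz : ∀ i, f i (z i) = z i)
    (hsum : Summable fun n : ℕ => posMax T z x n * c ^ (n + 1))
    (hπ : ∀ (a : ℕ) (w τ : ℕ → I), wcat a w τ ∈ T →
      Filter.Tendsto (fun n => seqComp f τ n x) Filter.atTop (nhds (π τ)))
    {a : ℕ} {w : ℕ → I} (hw : IsPrefixWord T a w) :
    hausdorffDist {x} (π '' Tsub T a w) ≤ (1 + c) * c⁻¹ ^ (a + 1) * bX T z x c a := by
  have hR : (0:ℝ) ≤ (1 + c) * c⁻¹ ^ (a + 1) * bX T z x c a := by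
    have hb := bX_nonneg (T := T) (z := z) (x := x) hc0 a
    have h2 : (0:ℝ) ≤ c⁻¹ ^ (a+1) := by positivity
    exact mul_nonneg (mul_nonneg (by linarith) h2) hb
  refine hausdorffDist_le_of_mem_dist hR ?_ ?_
  · rintro p rfl
    obtain ⟨σ₀, hσ₀⟩ := Tsub_nonempty hw
    exact ⟨π σ₀, Set.mem_image_of_mem π hσ₀, dist_x_pi hc0 hc1 hTc hf hz hsum hπ hσ₀⟩
  · rintro q ⟨σ, hσ, rfl⟩
    exact ⟨x, rfl, by rw [dist_comm]; exact dist_x_pi hc0 hc1 hTc hf hz hsum hπ hσ⟩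

lemma part_ii (hc0 : 0 < c) (hc1 : c < 1) (hTc : IsCompact T)
    (hf : ∀ i, ∀ u v : X, dist (f i u) (f i v) ≤ c * dist u v)
    (hz : ∀ i, f i (z i) = z i)
    (hsum : Summable fun n : ℕ => posMax T z x n * c ^ (n + 1))
    (hπ : ∀ (a : ℕ) (w τ : ℕ → I), wcat a w τ ∈ T →
      Filter.Tendsto (fun n => seqComp f τ n x) Filter.atTop (nhds (π τ)))
    (A : Set X) (hAne : A.Nonempty) (hAc : IsCompact A) :
    ∃ D > (0:ℝ), ∀ (a : ℕ) (w : ℕ → I), IsPrefixWord T a w →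
      hausdorffDist A (π '' Tsub T a w) ≤ D * max 1 (c⁻¹ ^ (a + 1) * bX T z x c a) := by
  have hCA0 : (0:ℝ) ≤ hausdorffDist A ({x} : Set X) := hausdorffDist_nonneg
  refine ⟨hausdorffDist A {x} + 1 + c, by linarith, ?_⟩
  intro a w hw
  have hπne : (π '' Tsub T a w).Nonempty := (Tsub_nonempty hw).image π
  have hfinAx : hausdorffEdist A {x} ≠ ⊤ :=
    hausdorffEdist_ne_top_of_nonempty_of_bounded hAne ⟨x, rfl⟩ hAc.isBounded
      Bornology.isBounded_singleton
  have htri := hausdorffDist_triangle (s := A) (t := {x}) (u := π '' Tsub T a w) hfinAx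
  have h2 := hdist_x_bound hc0 hc1 hTc hf hz hsum hπ hw
  set M := max 1 (c⁻¹ ^ (a + 1) * bX T z x c a) with hMdef
  have hM1 : (1:ℝ) ≤ M := le_max_left _ _
  have hM2 : c⁻¹ ^ (a + 1) * bX T z x c a ≤ M := le_max_right _ _
  have hCA : (0:ℝ) ≤ hausdorffDist A {x} := hausdorffDist_nonneg
  have h2' : hausdorffDist {x} (π '' Tsub T a w) ≤ (1 + c) * M := by
    rw [mul_assoc] at h2
    refine h2.trans ?_
    exact mul_le_mul_of_nonneg_left hM2 (by linarith)
  have hmul : hausdorffDist A ({x} : Set X) * 1 ≤ hausdorffDist A ({x} : Set X) * M :=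
    mul_le_mul_of_nonneg_left hM1 hCA
  have hexp : (hausdorffDist A ({x} : Set X) + 1 + c) * M
      = hausdorffDist A ({x} : Set X) * M + (1 + c) * M := by ring
  linarith

lemma uniqueness (hc0 : 0 < c) (hc1 : c < 1) (hTc : IsCompact T)
    (hf : ∀ i, ∀ u v : X, dist (f i u) (f i v) ≤ c * dist u v)
    (hz : ∀ i, f i (z i) = z i)
    (hsum : Summable fun n : ℕ => posMax T z x n * c ^ (n + 1))
    (hπ : ∀ (a : ℕ) (w τ : ℕ → I), wcat a w τ ∈ T →
      Filter.Tendsto (fun n => seqComp f τ n x) Filter.atTop (nhds (π τ)))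
    (K : ℕ → (ℕ → I) → Set X)
    (hK1 : ∀ (a : ℕ) (w : ℕ → I), IsPrefixWord T a w →
        (K a w).Nonempty ∧ IsCompact (K a w))
    (hK2 : ∀ (a : ℕ) (w : ℕ → I), IsPrefixWord T a w → ∀ n : ℕ, 1 ≤ n →
        (⋃ w' : ℕ → I, ⋃ (_ : IsPrefixWord (Tsub T a w) n w'),
          seqComp f w' n '' K (a + n) (wcat a w w')) = K a w)
    (hK3 : ∀ A : Set X, A.Nonempty → IsCompact A → ∃ D > (0 : ℝ),
        ∀ (a : ℕ) (w : ℕ → I), IsPrefixWord T a w →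
          Metric.hausdorffDist A (K a w) ≤
            D * max 1 (c⁻¹ ^ (a + 1) * bX T z x c a))
    (a : ℕ) (w : ℕ → I) (hw : IsPrefixWord T a w) :
    K a w = π '' Tsub T a w := by
  obtain ⟨D, hD, hKb⟩ := hK3 {x} ⟨x, rfl⟩ isCompact_singleton
  have hKS := hK1 a w hw
  have hπSne : (π '' Tsub T a w).Nonempty := (Tsub_nonempty hw).image π
  have hπSc : IsCompact (π '' Tsub T a w) :=
    (isCompact_Tsub hTc a w).image_of_continuousOn
      (continuousOn_proj hc0 hc1 hTc hf hz hsum hπ a w)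
  have main : ∀ n : ℕ, 1 ≤ n → hausdorffEdist (K a w) (π '' Tsub T a w)
      ≤ ENNReal.ofReal ((D + 1 + c) *
        (c ^ n * max 1 (c⁻¹ ^ (a + n + 1) * bX T z x c (a + n)))) := by
    intro n hn
    set M := max 1 (c⁻¹ ^ (a + n + 1) * bX T z x c (a + n)) with hMdef
    have hM1 : (1:ℝ) ≤ M := le_max_left _ _
    have hM0 : (0:ℝ) ≤ M := zero_le_one.trans hM1
    have hB0 : (0:ℝ) ≤ (D + 1 + c) * (c ^ n * M) := by
      have hcn : (0:ℝ) ≤ c ^ n := by positivity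
      exact mul_nonneg (by linarith) (mul_nonneg hcn hM0)
    have key : ∀ w' : ℕ → I, IsPrefixWord (Tsub T a w) n w' →
        IsPrefixWord T (a + n) (wcat a w w') := by
      intro w' hw'
      obtain ⟨τ, hτ, hpre⟩ := hw'
      refine ⟨wcat a w τ, hτ, fun k hk => ?_⟩
      simp only [wcat]
      rcases lt_or_ge k a with h | h
      · rw [if_pos h, if_pos h]
      · rw [if_neg (by omega), if_neg (by omega)]
        exact hpre _ (by omega)
    have hb : ∀ w' : ℕ → I, IsPrefixWord (Tsub T a w) n w' →
        hausdorffDist (K (a + n) (wcat a w w')) (π '' Tsub T (a + n) (wcat a w w'))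
            ≤ (D + 1 + c) * M ∧
        hausdorffEdist (K (a + n) (wcat a w w')) (π '' Tsub T (a + n) (wcat a w w')) ≠ ⊤ ∧
        (K (a + n) (wcat a w w')).Nonempty ∧ IsCompact (K (a + n) (wcat a w w')) ∧
        (π '' Tsub T (a + n) (wcat a w w')).Nonempty ∧
        IsCompact (π '' Tsub T (a + n) (wcat a w w')) := by
      intro w' hw'
      have hw'' := key w' hw'
      have hKne := hK1 _ _ hw''
      have hπne : (π '' Tsub T (a + n) (wcat a w w')).Nonempty :=
        (Tsub_nonempty hw'').image π
      have hπcomp : IsCompact (π '' Tsub T (a + n) (wcat a w w')) :=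
        (isCompact_Tsub hTc _ _).image_of_continuousOn
          (continuousOn_proj hc0 hc1 hTc hf hz hsum hπ _ _)
      have hfin' : hausdorffEdist (K (a + n) (wcat a w w'))
          (π '' Tsub T (a + n) (wcat a w w')) ≠ ⊤ :=
        hausdorffEdist_ne_top_of_nonempty_of_bounded hKne.1 hπne hKne.2.isBounded
          hπcomp.isBounded
      have hfinx : hausdorffEdist (K (a + n) (wcat a w w')) {x} ≠ ⊤ :=
        hausdorffEdist_ne_top_of_nonempty_of_bounded hKne.1 ⟨x, rfl⟩ hKne.2.isBounded
          Bornology.isBounded_singleton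
      have h1 : hausdorffDist (K (a + n) (wcat a w w')) {x} ≤ D * M := by
        rw [hausdorffDist_comm]
        exact hKb (a + n) _ hw''
      have h2 : hausdorffDist {x} (π '' Tsub T (a + n) (wcat a w w')) ≤ (1 + c) * M := by
        have h2a := hdist_x_bound hc0 hc1 hTc hf hz hsum hπ hw''
        rw [mul_assoc] at h2a
        refine h2a.trans (mul_le_mul_of_nonneg_left (le_max_right _ _) (by linarith))
      have htri := hausdorffDist_triangle (s := K (a + n) (wcat a w w')) (t := {x})
        (u := π '' Tsub T (a + n) (wcat a w w')) hfinx
      have hexp : (D + 1 + c) * M = D * M + (1 + c) * M := by ring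
      refine ⟨by linarith, hfin', hKne.1, hKne.2, hπne, hπcomp⟩
    refine hausdorffEdist_le_of_mem_edist ?_ ?_
    · intro p hp
      rw [← hK2 a w hw n hn] at hp
      obtain ⟨s, ⟨w', rfl⟩, hp2⟩ := hp
      obtain ⟨s2, ⟨hw', rfl⟩, hp3⟩ := hp2
      obtain ⟨u, hu, rfl⟩ := hp3
      obtain ⟨hb1, hb2, hbKne, hbKc, hbπne, hbπc⟩ := hb w' hw'
      have hinf : Metric.infDist u (π '' Tsub T (a + n) (wcat a w w')) ≤ (D + 1 + c) * M :=
        (infDist_le_hausdorffDist_of_mem hu hb2).trans hb1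
      obtain ⟨v, hv, hvd⟩ := hbπc.exists_infDist_eq_dist hbπne u
      have hduv : dist u v ≤ (D + 1 + c) * M := by rw [← hvd]; exact hinf
      refine ⟨seqComp f w' n v, ?_, ?_⟩
      · rw [← part_i hc0 hf hπ a w n]
        exact Set.mem_iUnion.2 ⟨w', Set.mem_iUnion.2 ⟨hw', Set.mem_image_of_mem _ hv⟩⟩
      · rw [edist_le_ofReal hB0]
        have h5 := seqComp_dist_le hc0 hf w' n u v
        have h6 : (0:ℝ) ≤ c ^ n := by positivity
        nlinarith
    · intro q hq
      rw [← part_i hc0 hf hπ a w n] at hq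
      obtain ⟨s, ⟨w', rfl⟩, hq2⟩ := hq
      obtain ⟨s2, ⟨hw', rfl⟩, hq3⟩ := hq2
      obtain ⟨v, hv, rfl⟩ := hq3
      obtain ⟨hb1, hb2, hbKne, hbKc, hbπne, hbπc⟩ := hb w' hw'
      have hinf : Metric.infDist v (K (a + n) (wcat a w w')) ≤ (D + 1 + c) * M := by
        have h := infDist_le_hausdorffDist_of_mem hv
          (by rw [hausdorffEDist_comm]; exact hb2)
        rw [hausdorffDist_comm] at h
        exact h.trans hb1
      obtain ⟨u, hu, hud⟩ := hbKc.exists_infDist_eq_dist hbKne v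
      have hduv : dist v u ≤ (D + 1 + c) * M := by rw [← hud]; exact hinf
      refine ⟨seqComp f w' n u, ?_, ?_⟩
      · rw [← hK2 a w hw n hn]
        exact Set.mem_iUnion.2 ⟨w', Set.mem_iUnion.2 ⟨hw', Set.mem_image_of_mem _ hu⟩⟩
      · rw [edist_le_ofReal hB0]
        have h5 := seqComp_dist_le hc0 hf w' n v u
        have h6 : (0:ℝ) ≤ c ^ n := by positivity
        nlinarith
  -- the bound tends to zero
  have harith : ∀ n : ℕ, c ^ n * (c⁻¹ ^ (a + n + 1) * bX T z x c (a + n))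
      = c⁻¹ ^ (a + 1) * bX T z x c (a + n) := by
    intro n
    rw [show a + n + 1 = (a + 1) + n by omega, pow_add]
    have hcc : c ^ n * c⁻¹ ^ n = 1 := by
      rw [← mul_pow, mul_inv_cancel₀ (ne_of_gt hc0), one_pow]
    calc c ^ n * (c⁻¹ ^ (a + 1) * c⁻¹ ^ n * bX T z x c (a + n))
        = (c ^ n * c⁻¹ ^ n) * (c⁻¹ ^ (a + 1) * bX T z x c (a + n)) := by ring
      _ = c⁻¹ ^ (a + 1) * bX T z x c (a + n) := by rw [hcc, one_mul]
  have htend : Filter.Tendsto (fun n => (D + 1 + c) *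
      (c ^ n * max 1 (c⁻¹ ^ (a + n + 1) * bX T z x c (a + n)))) Filter.atTop (nhds 0) := by
    have heq : (fun n => c ^ n * max 1 (c⁻¹ ^ (a + n + 1) * bX T z x c (a + n)))
        = fun n => max (c ^ n) (c⁻¹ ^ (a + 1) * bX T z x c (a + n)) := by
      funext n
      rw [mul_max_of_nonneg _ _ (by positivity : (0:ℝ) ≤ c ^ n), mul_one, harith n]
    have h1 : Filter.Tendsto (fun n : ℕ => c ^ n) Filter.atTop (nhds 0) :=
      tendsto_pow_atTop_nhds_zero_of_lt_one hc0.le hc1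
    have h2 : Filter.Tendsto (fun n => c⁻¹ ^ (a + 1) * bX T z x c (a + n))
        Filter.atTop (nhds 0) := by
      have := (bX_tendsto (T := T) (z := z) (x := x) hc0 hsum a).const_mul (c⁻¹ ^ (a + 1))
      simpa using this
    have h3 := h1.max h2
    rw [max_self] at h3
    have heq2 : (fun n => (D + 1 + c) *
        (c ^ n * max 1 (c⁻¹ ^ (a + n + 1) * bX T z x c (a + n))))
        = fun n => (D + 1 + c) * max (c ^ n) (c⁻¹ ^ (a + 1) * bX T z x c (a + n)) := by
      funext n
      rw [mul_max_of_nonneg _ _ (by positivity : (0:ℝ) ≤ c ^ n), mul_one, harith n]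
    rw [heq2]
    have h4 := h3.const_mul (D + 1 + c)
    simpa using h4
  have hfin : hausdorffEdist (K a w) (π '' Tsub T a w) ≠ ⊤ :=
    hausdorffEdist_ne_top_of_nonempty_of_bounded hKS.1 hπSne hKS.2.isBounded hπSc.isBounded
  have hdle : ∀ n ≥ 1, hausdorffDist (K a w) (π '' Tsub T a w)
      ≤ (D + 1 + c) * (c ^ n * max 1 (c⁻¹ ^ (a + n + 1) * bX T z x c (a + n))) := by
    intro n hn
    have hB0 : (0:ℝ) ≤ (D + 1 + c) *
        (c ^ n * max 1 (c⁻¹ ^ (a + n + 1) * bX T z x c (a + n))) := by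
      have hM1 : (1:ℝ) ≤ max 1 (c⁻¹ ^ (a + n + 1) * bX T z x c (a + n)) := le_max_left _ _
      exact mul_nonneg (by linarith) (mul_nonneg (by positivity) (by linarith))
    have h := main n hn
    calc hausdorffDist (K a w) (π '' Tsub T a w)
        = (hausdorffEdist (K a w) (π '' Tsub T a w)).toReal := rfl
      _ ≤ (ENNReal.ofReal ((D + 1 + c) *
          (c ^ n * max 1 (c⁻¹ ^ (a + n + 1) * bX T z x c (a + n))))).toReal :=
          ENNReal.toReal_mono ENNReal.ofReal_ne_top h
      _ = _ := ENNReal.toReal_ofReal hB0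
  have hle0 : hausdorffDist (K a w) (π '' Tsub T a w) ≤ 0 :=
    ge_of_tendsto htend (Filter.eventually_atTop.2 ⟨1, hdle⟩)
  have hdz : hausdorffDist (K a w) (π '' Tsub T a w) = 0 :=
    le_antisymm hle0 hausdorffDist_nonneg
  exact (IsClosed.hausdorffDist_zero_iff_eq hKS.2.isClosed hπSc.isClosed hfin).1 hdz

end Aux4


/-- For a general IFS with the summability condition, the family of
limit sets `{π(T_ω)}` (indexed by finite prefix words `ω` of `T`) consists of nonempty
compact sets, satisfies the self-similarity property (i) and the Hausdorff-distance bound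
(ii) `ρ_H(A, π(T_ω)) ≤ D'(A)·max{1, c^{-(|ω|+1)} b_x(|ω|+1)}`, and is the unique family of
nonempty compact subsets with properties (i) and (ii). -/
theorem stmt15 {X I : Type*} [MetricSpace X] [CompleteSpace X]
    [Countable I] [TopologicalSpace I] [DiscreteTopology I]
    (c : ℝ) (hc0 : 0 < c) (hc1 : c < 1)
    (T : Set (ℕ → I)) (hTne : T.Nonempty) (hTc : IsCompact T)
    (f : I → X → X) (hf : ∀ i, ∀ u v : X, dist (f i u) (f i v) ≤ c * dist u v)
    (z : I → X) (hz : ∀ i, f i (z i) = z i)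
    (x : X) (hsum : Summable fun n : ℕ => posMax T z x n * c ^ (n + 1))
    (π : (ℕ → I) → X)
    (hπ : ∀ (a : ℕ) (w τ : ℕ → I), wcat a w τ ∈ T →
      Filter.Tendsto (fun n => seqComp f τ n x) Filter.atTop (nhds (π τ))) :
    ((∀ (a : ℕ) (w : ℕ → I), IsPrefixWord T a w →
        (π '' Tsub T a w).Nonempty ∧ IsCompact (π '' Tsub T a w)) ∧
     (∀ (a : ℕ) (w : ℕ → I), IsPrefixWord T a w → ∀ n : ℕ, 1 ≤ n →
        (⋃ w' : ℕ → I, ⋃ (_ : IsPrefixWord (Tsub T a w) n w'),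
          seqComp f w' n '' (π '' Tsub T (a + n) (wcat a w w'))) = π '' Tsub T a w) ∧
     (∀ A : Set X, A.Nonempty → IsCompact A → ∃ D > (0 : ℝ),
        ∀ (a : ℕ) (w : ℕ → I), IsPrefixWord T a w →
          Metric.hausdorffDist A (π '' Tsub T a w) ≤
            D * max 1 (c⁻¹ ^ (a + 1) * bX T z x c a))) ∧
    (∀ K : ℕ → (ℕ → I) → Set X,
      (∀ (a : ℕ) (w : ℕ → I), IsPrefixWord T a w →
        (K a w).Nonempty ∧ IsCompact (K a w)) →
      (∀ (a : ℕ) (w : ℕ → I), IsPrefixWord T a w → ∀ n : ℕ, 1 ≤ n →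
        (⋃ w' : ℕ → I, ⋃ (_ : IsPrefixWord (Tsub T a w) n w'),
          seqComp f w' n '' K (a + n) (wcat a w w')) = K a w) →
      (∀ A : Set X, A.Nonempty → IsCompact A → ∃ D > (0 : ℝ),
        ∀ (a : ℕ) (w : ℕ → I), IsPrefixWord T a w →
          Metric.hausdorffDist A (K a w) ≤
            D * max 1 (c⁻¹ ^ (a + 1) * bX T z x c a)) →
      ∀ (a : ℕ) (w : ℕ → I), IsPrefixWord T a w → K a w = π '' Tsub T a w) := by
  
  refine ⟨⟨?_, ?_, ?_⟩, ?_⟩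
  · intro a w hw
    exact ⟨(Tsub_nonempty hw).image π,
      (isCompact_Tsub hTc a w).image_of_continuousOn
        (continuousOn_proj hc0 hc1 hTc hf hz hsum hπ a w)⟩
  · intro a w hw n hn
    exact part_i hc0 hf hπ a w n
  · intro A hAne hAc
    exact part_ii hc0 hc1 hTc hf hz hsum hπ A hAne hAc
  · intro K hK1 hK2 hK3 a w hw
    exact uniqueness hc0 hc1 hTc hf hz hsum hπ K hK1 hK2 hK3 a w hw
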